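/- arXiv:0712.2403 — 6 statements merged into one kernel-verified Lean document; each statement's English description precedes it below -/
import Mathlib

section
/- Let t_1,...,t_k be integers and A the k×k companion matrix of X^k - t_1 X^{k-1} - ... - t_k over Z/pZ, with p prime not dividing t_k. Then the recursion {f_n mod p} (generalized Fibonacci sequence) is periodic with period exactly equal to the order of A in GL_k(Z/pZ). -/
/-- The companion matrix of `X^k - t_1 X^{k-1} - ... - t_k`: superdiagonal 1's and
last row `(t_k, t_{k-1}, ..., t_1)` (with `t j` denoting `t_{j+1}`). -/
def companion {R : Type*} [CommRing R] (k : ℕ) (t : Fin k → R) :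
    Matrix (Fin k) (Fin k) R :=
  Matrix.of fun i j =>
    if (i : ℕ) + 1 = k then t j.rev
    else if (j : ℕ) = (i : ℕ) + 1 then 1 else 0

/-!
Write `F` for `f mod p` and `v m = (F m, …, F (m + k - 1))`. The recurrence says exactly that
`A v m = v (m + 1)`, so `A ^ c = 1` forces `F` to be `c`-periodic. Conversely, the initial
conditions make the Hankel matrix with columns `v 0, …, v (k - 1)` unitriangular up to a column
reversal, hence invertible, and `c`-periodicity of `F` says `A ^ c` fixes it, so `A ^ c = 1`.
As `p ∤ t_k`, the matrix `A` is invertible over the finite ring `ZMod p`, so it has finite order.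
-/

open Matrix

variable {R : Type*} [CommRing R] {n : ℕ}

def window (k : ℕ) (F : ℕ → R) (m : ℕ) : Fin k → R := fun i => F (m + i)

def hankel (k : ℕ) (F : ℕ → R) : Matrix (Fin k) (Fin k) R := Matrix.of fun i j => F (i + j)

section Companion

variable (t : Fin (n + 1) → R)

theorem companion_apply_last (j : Fin (n + 1)) :
    companion (n + 1) t (Fin.last n) j = t j.rev := by
  simp [companion]

theorem companion_apply_of_ne_last {i : Fin (n + 1)} (hi : i ≠ Fin.last n) (j : Fin (n + 1)) :
    companion (n + 1) t i j = if j = i + 1 then 1 else 0 := by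
  have hi' : (i : ℕ) ≠ n := fun h => hi (Fin.ext h)
  simp [companion, hi', Fin.ext_iff, Fin.val_add_one_of_lt (Fin.val_lt_last hi)]

theorem isUnit_companion (ht : IsUnit (t (Fin.last n))) : IsUnit (companion (n + 1) t) := by
  -- rotating the columns gives a lower triangular matrix with diagonal `(1, …, 1, t_k)`
  set B := (companion (n + 1) t).submatrix id (finRotate (n + 1))
  have hB : B.IsLowerTriangular := by
    intro i j (hij : i < j)
    have hi : i ≠ Fin.last n := ne_of_lt (lt_of_lt_of_le hij (Fin.le_last _))
    simp [B, companion_apply_of_ne_last t hi, hij.ne']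
  have hdet : B.det = t (Fin.last n) := by
    rw [det_of_isLowerTriangular B hB, Fin.prod_univ_castSucc]
    simp [B, companion_apply_of_ne_last t (Fin.castSucc_lt_last _).ne, companion_apply_last]
  rw [det_permute'] at hdet
  rw [isUnit_iff_isUnit_det]
  exact (IsUnit.mul_iff.mp (hdet ▸ ht)).2

end Companion

theorem isUnit_hankel {F : ℕ → R} (hF0 : ∀ m < n, F m = 0) (hF1 : F n = 1) :
    IsUnit (hankel (n + 1) F) := by
  -- reversing the columns gives a lower triangular matrix with diagonal entries `F n = 1`
  set B := (hankel (n + 1) F).submatrix id Fin.revPerm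
  have hB : B.IsLowerTriangular := by
    intro i j (hij : (i : ℕ) < j)
    simp only [B, hankel, submatrix_apply, id, Fin.revPerm_apply, of_apply]
    exact hF0 _ (by simp [Fin.val_rev]; omega)
  have hdet : B.det = 1 := by
    rw [det_of_isLowerTriangular B hB]
    refine Finset.prod_eq_one fun i _ => ?_
    simp only [B, hankel, submatrix_apply, id, Fin.revPerm_apply, of_apply]
    rw [← hF1]; congr 1; simp [Fin.val_rev]; omega
  rw [det_permute'] at hdet
  rw [isUnit_iff_isUnit_det]
  exact IsUnit.of_mul_eq_one_right _ hdet

section Recurrence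

variable (t : Fin (n + 1) → R) {F : ℕ → R}
  (hF : ∀ m, F (m + (n + 1)) = ∑ j : Fin (n + 1), t j.rev * F (m + j))
include hF

theorem companion_mulVec_window (m : ℕ) :
    companion (n + 1) t *ᵥ window (n + 1) F m = window (n + 1) F (m + 1) := by
  ext i
  by_cases hi : i = Fin.last n
  · subst hi
    simp only [mulVec, dotProduct, companion_apply_last, window, Fin.val_last]
    rw [← hF, add_right_comm, add_assoc]
  · simp only [mulVec, dotProduct, companion_apply_of_ne_last t hi, ite_mul, one_mul,
      zero_mul, Finset.sum_ite_eq', Finset.mem_univ, if_true, window,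
      Fin.val_add_one_of_lt (Fin.val_lt_last hi)]
    ring_nf

theorem companion_pow_mulVec_window (c m : ℕ) :
    companion (n + 1) t ^ c *ᵥ window (n + 1) F m = window (n + 1) F (m + c) := by
  induction c with
  | zero => simp
  | succ c ih =>
    rw [pow_succ', ← mulVec_mulVec, ih, companion_mulVec_window t hF, add_assoc]

theorem companion_pow_mul_hankel (c : ℕ) :
    companion (n + 1) t ^ c * hankel (n + 1) F = hankel (n + 1) fun m => F (m + c) := by
  ext i j
  have hcol := congr_fun (companion_pow_mulVec_window t hF c j) i
  simp only [mulVec, dotProduct, window] at hcol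
  simp only [mul_apply, hankel, of_apply]
  simp_rw [add_comm _ (j : ℕ)]
  rw [hcol]
  ring_nf

variable (hF0 : ∀ m < n, F m = 0) (hF1 : F n = 1)
include hF0 hF1

theorem companion_pow_eq_one_iff_periodic (c : ℕ) :
    companion (n + 1) t ^ c = 1 ↔ ∀ m, F (m + c) = F m := by
  constructor
  · intro h m
    simpa [window, h] using (congr_fun (companion_pow_mulVec_window t hF c m) 0).symm
  · intro h
    have hshift : (fun m => F (m + c)) = F := funext h
    apply (isUnit_hankel hF0 hF1).mul_left_injective
    simpa [hshift] using companion_pow_mul_hankel t hF c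

theorem isLeast_period_orderOf_companion (hA : IsOfFinOrder (companion (n + 1) t)) :
    IsLeast {c | 0 < c ∧ ∀ m, F (m + c) = F m} (orderOf (companion (n + 1) t)) := by
  simp_rw [← companion_pow_eq_one_iff_periodic t hF hF0 hF1]
  exact ⟨⟨hA.orderOf_pos, pow_orderOf_eq_one _⟩, fun c ⟨hc, h⟩ => orderOf_le_of_pow_eq_one hc h⟩

end Recurrence

/-- If `p ∤ t_k`, the generalized Fibonacci sequence mod `p` is periodic
with least period exactly the order of the companion matrix `A` in `GL_k(ℤ/p)`. -/
theorem gfp_period_eq_orderOf_companion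
    (k : ℕ) (hk : 1 ≤ k) (t : Fin k → ℤ) (f : ℕ → ℤ)
    (h0 : ∀ j, j < k - 1 → f j = 0) (h1 : f (k - 1) = 1)
    (hrec : ∀ n, k ≤ n → f n = ∑ j : Fin k, t j * f (n - 1 - (j : ℕ)))
    (p : ℕ) (hp : p.Prime) (hpt : ¬ (p : ℤ) ∣ t ⟨k - 1, by omega⟩) :
    IsLeast {c : ℕ | 0 < c ∧ ∀ n, ((f (n + c) : ZMod p) = (f n : ZMod p))}
      (orderOf (companion k fun j => ((t j : ZMod p)))) := by
  obtain ⟨n, rfl⟩ : ∃ n, k = n + 1 := ⟨k - 1, by omega⟩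
  have : Fact p.Prime := ⟨hp⟩
  have hF (m : ℕ) : ((f (m + (n + 1)) : ℤ) : ZMod p) =
      ∑ j : Fin (n + 1), ((t j.rev : ℤ) : ZMod p) * (f (m + j) : ZMod p) := by
    rw [hrec _ (by omega)]
    push_cast
    refine Fintype.sum_equiv Fin.revPerm _ _ fun j => ?_
    simp only [Fin.revPerm_apply, Fin.rev_rev, Fin.val_rev]
    congr 3
    omega
  have hF0 (m : ℕ) (hm : m < n) : ((f m : ℤ) : ZMod p) = 0 := by simp [h0 m (by omega)]
  have hF1 : ((f n : ℤ) : ZMod p) = 1 := by simp [show f n = 1 by simpa using h1]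
  have htk : IsUnit ((t (Fin.last n) : ℤ) : ZMod p) := by
    rwa [isUnit_iff_ne_zero, Ne, ZMod.intCast_zmod_eq_zero_iff_dvd]
  exact isLeast_period_orderOf_companion _ hF hF0 hF1 (isUnit_companion _ htk).isOfFinOrder
end

section
/- Let A be the companion matrix of X^k - t_1 X^{k-1} - ... - t_k over a commutative ring. For every n ≥ 0, the trace of A^n equals the generalized Lucas polynomial G_{k,n}(t_1,...,t_k), i.e., the sum of λ_i^n over the roots λ_i of the polynomial; equivalently tr(A^n) is the isobaric reflect of the n-th power sum symmetric polynomial evaluated at (t_1,...,t_k). -/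
open Polynomial
open scoped Matrix

section

variable {R : Type*} [CommRing R] {k : ℕ}

noncomputable def corePoly (k : ℕ) (t : Fin k → R) : R[X] :=
  X ^ k - ∑ j : Fin k, C (t j) * X ^ (k - 1 - (j : ℕ))

theorem coeff_corePoly (t : Fin k → R) (j : Fin k) :
    (corePoly k t).coeff (k - 1 - (j : ℕ)) = -t j := by
  have hj := j.isLt
  have hterm (m : Fin k) : (C (t m) * X ^ (k - 1 - (m : ℕ))).coeff (k - 1 - (j : ℕ)) =
      if m = j then t j else 0 := by
    rw [coeff_C_mul, coeff_X_pow]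
    by_cases hm : m = j
    · simp [hm]
    · have : k - 1 - (j : ℕ) ≠ k - 1 - (m : ℕ) := fun h => hm (Fin.ext (by omega))
      simp [hm, this]
  simp only [corePoly, coeff_sub, coeff_X_pow, finsetSum_coeff, hterm]
  simp [show k - 1 - (j : ℕ) ≠ k by omega]

theorem corePoly_injective : Function.Injective (corePoly (R := R) k) := fun t t' h =>
  funext fun j => neg_injective <| by rw [← coeff_corePoly, h, coeff_corePoly]

theorem map_corePoly {S : Type*} [CommRing S] (f : R →+* S) (t : Fin k → R) :
    (corePoly k t).map f = corePoly k (f ∘ t) := by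
  simp [corePoly, Polynomial.map_sub, Polynomial.map_sum]

theorem eval_corePoly (t : Fin k → R) (x : R) :
    (corePoly k t).eval x = x ^ k - ∑ j : Fin k, t j * x ^ (k - 1 - (j : ℕ)) := by
  simp [corePoly, eval_finsetSum]

theorem corePoly_neg_coeff_of_monic {p : R[X]} (hp : p.Monic) (hdeg : p.natDegree = k) :
    corePoly k (fun j : Fin k => -p.coeff (k - 1 - (j : ℕ))) = p := by
  have hrev : ∑ j : Fin k, C (-p.coeff (k - 1 - (j : ℕ))) * X ^ (k - 1 - (j : ℕ)) =
      -∑ m ∈ Finset.range k, C (p.coeff m) * X ^ m := by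
    rw [Fin.sum_univ_eq_sum_range (fun j => C (-p.coeff (k - 1 - j)) * X ^ (k - 1 - j)),
      Finset.sum_range_reflect (fun m => C (-p.coeff m) * X ^ m), ← Finset.sum_neg_distrib]
    simp
  rw [corePoly, hrev, sub_neg_eq_add]
  conv_rhs => rw [hp.as_sum, hdeg]

theorem RingHom.mapMatrix_companion {S : Type*} [CommRing S] (f : R →+* S) (t : Fin k → R) :
    f.mapMatrix (companion k t) = companion k (f ∘ t) := by
  ext i j
  simp only [RingHom.mapMatrix_apply, Matrix.map_apply, companion, Matrix.of_apply]
  split_ifs <;> simp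

theorem companion_mulVec_pow_of_isRoot {t : Fin k → R} {x : R}
    (hx : (corePoly k t).IsRoot x) :
    companion k t *ᵥ (fun m : Fin k => x ^ (m : ℕ)) = x • fun m : Fin k => x ^ (m : ℕ) := by
  ext i
  simp only [Matrix.mulVec, dotProduct, companion, Matrix.of_apply, Pi.smul_apply, smul_eq_mul]
  split_ifs with hi
  · have hroot : x ^ k = ∑ j : Fin k, t j * x ^ (k - 1 - (j : ℕ)) :=
      sub_eq_zero.mp (by rw [← eval_corePoly]; exact hx)
    rw [← Equiv.sum_comp Fin.revPerm]
    simp only [Fin.revPerm_apply, Fin.rev_rev, Fin.val_rev]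
    rw [← pow_succ', hi, hroot]
    exact Finset.sum_congr rfl fun j _ => by congr 2; omega
  · have hlt : (i : ℕ) + 1 < k := by omega
    rw [Finset.sum_eq_single ⟨(i : ℕ) + 1, hlt⟩
      (fun m _ hm => by simp [Fin.ext_iff] at hm; simp [hm]) (by simp)]
    simp [pow_succ']

theorem companion_mul_vandermonde {t lam : Fin k → R}
    (hroot : ∀ i, (corePoly k t).IsRoot (lam i)) :
    companion k t * (Matrix.vandermonde lam)ᵀ =
      (Matrix.vandermonde lam)ᵀ * Matrix.diagonal lam := by
  ext i j
  have hcol := congrFun (companion_mulVec_pow_of_isRoot (hroot j)) i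
  rw [Matrix.mul_diagonal]
  simpa [Matrix.mulVec, dotProduct, Matrix.mul_apply, Matrix.vandermonde, mul_comm] using hcol

theorem Matrix.det_mul_trace_of_mul_eq_mul_diagonal {n : Type*} [Fintype n] [DecidableEq n]
    {A W : Matrix n n R} {d : n → R} (h : A * W = W * diagonal d) :
    W.det * A.trace = W.det * ∑ i, d i :=
  calc W.det * A.trace = trace (A * (W * adjugate W)) := by
        rw [mul_adjugate, Matrix.mul_smul, Matrix.mul_one, trace_smul, smul_eq_mul]
    _ = trace (adjugate W * (A * W)) := by rw [← Matrix.mul_assoc, trace_mul_comm]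
    _ = trace (adjugate W * W * diagonal d) := by rw [h, Matrix.mul_assoc]
    _ = W.det * ∑ i, d i := by
        rw [adjugate_mul, Matrix.smul_mul, Matrix.one_mul, trace_smul, trace_diagonal, smul_eq_mul]

theorem trace_companion_pow_of_injective [IsDomain R] {t lam : Fin k → R}
    (hlam : Function.Injective lam)
    (hroot : ∀ i, (corePoly k t).IsRoot (lam i)) (n : ℕ) :
    (companion k t ^ n).trace = ∑ i, lam i ^ n := by
  have hsemiconj : SemiconjBy (Matrix.vandermonde lam)ᵀ (Matrix.diagonal lam ^ n)
      (companion k t ^ n) :=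
    SemiconjBy.pow_right (companion_mul_vandermonde hroot).symm n
  rw [Matrix.diagonal_pow] at hsemiconj
  have hdet : (Matrix.vandermonde lam)ᵀ.det ≠ 0 := by
    rw [Matrix.det_transpose]; exact Matrix.det_vandermonde_ne_zero_iff.mpr hlam
  exact mul_left_cancel₀ hdet (Matrix.det_mul_trace_of_mul_eq_mul_diagonal hsemiconj.symm)

end

/-- if the core polynomial splits with roots `λ_1, ..., λ_k`, then
`tr(A^n) = Σ_i λ_i^n`, the generalized Lucas polynomial (power-sum) evaluated
at `(t_1, ..., t_k)`. -/
theorem trace_companion_pow_eq_powerSum {R : Type*} [CommRing R] (k : ℕ)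
    (t : Fin k → R) (lam : Fin k → R)
    (hsplit :
      (Polynomial.X ^ k -
          ∑ j : Fin k, Polynomial.C (t j) * Polynomial.X ^ (k - 1 - (j : ℕ))) =
        ∏ i : Fin k, (Polynomial.X - Polynomial.C (lam i))) :
    ∀ n : ℕ, (companion k t ^ n).trace = ∑ i : Fin k, lam i ^ n := by
  intro n
  let P : (MvPolynomial (Fin k) ℤ)[X] := ∏ i, (X - C (MvPolynomial.X i))
  let T : Fin k → MvPolynomial (Fin k) ℤ := fun j => -P.coeff (k - 1 - (j : ℕ))
  have hT : corePoly k T = P := corePoly_neg_coeff_of_monic (monic_prod_X_sub_C _ _) (by simp [P])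
  have hgeneric : (companion k T ^ n).trace = ∑ i, MvPolynomial.X i ^ n :=
    trace_companion_pow_of_injective MvPolynomial.X_injective
      (fun i => by rw [hT]; simp [P, eval_prod, Finset.prod_eq_zero_iff, sub_eq_zero]) n
  let φ : MvPolynomial (Fin k) ℤ →+* R := (MvPolynomial.aeval lam).toRingHom
  have hφT : φ ∘ T = t := corePoly_injective <| by
    rw [← map_corePoly, hT, Polynomial.map_prod, corePoly, hsplit]
    simp [φ]
  have hspecialized := congrArg φ hgeneric
  rw [AddMonoidHom.map_trace, ← RingHom.mapMatrix_apply, map_pow, RingHom.mapMatrix_companion,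
    hφT, map_sum] at hspecialized
  simpa [φ] using hspecialized
end

section
/- Let A be the companion matrix of X^k - t_1 X^{k-1} - ... - t_k over a commutative ring. Then for every n ≥ 0, the (k,k) entry of A^n equals the generalized Fibonacci polynomial F_{k,n}(t_1,...,t_k) = Σ_{α ⊢ n} multinomial(|α|; α_1,...,α_k) t_1^{α_1} ... t_k^{α_k}, where the sum is over nonnegative integer vectors (α_1,...,α_k) with Σ j·α_j = n. -/
/-- The generalized Fibonacci polynomial
`F_{k,n}(t) = Σ_{α ⊢ n} multinomial(|α|; α) t_1^{α_1} ⋯ t_k^{α_k}`,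
the sum over `α : Fin k → ℕ` with `Σ_j (j+1)·α_j = n`. -/
def genFib {R : Type*} [CommRing R] (k n : ℕ) (t : Fin k → R) : R :=
  ∑ α ∈ (Fintype.piFinset fun _ : Fin k => Finset.range (n + 1)).filter
      (fun α => ∑ j : Fin k, ((j : ℕ) + 1) * α j = n),
    (Nat.multinomial Finset.univ α : R) * ∏ j : Fin k, t j ^ α j

/-!
Removing one part from a partition and applying Pascal's rule for multinomial coefficients gives
the recurrence `F_{k,n+1} = Σ_j t_{j+1} F_{k,n-j}`. Left multiplication by the companion matrix
shifts the rows of a matrix up by one and puts `Σ_j t_{j+1} · (row k - j)` in the last row, so the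
last column of `A^n` satisfies the same recurrence: `(A^n)_{i,k} = F_{k, n + i - k}` by induction
on `n`.
-/

open Finset

lemma Pi.single_one_le {ι : Type*} [DecidableEq ι] {f : ι → ℕ} {j : ι} (hj : f j ≠ 0) :
    Pi.single j 1 ≤ f := fun i => by
  rcases eq_or_ne i j with rfl | hij <;> simp [*, Nat.one_le_iff_ne_zero]

lemma prod_pow_add_single_one {ι M : Type*} [Fintype ι] [DecidableEq ι] [CommMonoid M]
    (t : ι → M) (β : ι → ℕ) (j : ι) :
    ∏ i, t i ^ (β + Pi.single j 1 : ι → ℕ) i = t j * ∏ i, t i ^ β i := by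
  simp only [Pi.add_apply, pow_add, prod_mul_distrib, mul_comm (t j)]
  congr 1
  rw [Fintype.prod_eq_single j fun i hi => by rw [Pi.single_eq_of_ne hi, pow_zero],
    Pi.single_eq_same, pow_one]

namespace Nat

variable {ι : Type*} [DecidableEq ι] {s : Finset ι}

lemma prod_factorial_add_single_one {j : ι} (hj : j ∈ s) (g : ι → ℕ) :
    ∏ i ∈ s, (g i + (Pi.single j 1 : ι → ℕ) i)! = (g j + 1) * ∏ i ∈ s, (g i)! := by
  rw [← mul_prod_erase s _ hj, ← mul_prod_erase s (fun i => (g i)!) hj,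
    prod_congr rfl fun i hi => by rw [Pi.single_eq_of_ne (ne_of_mem_erase hi), add_zero]]
  simp [factorial_succ, mul_assoc]

theorem multinomial_eq_sum_sub_single {f : ι → ℕ} (hf : ∑ i ∈ s, f i ≠ 0) :
    multinomial s f = ∑ j ∈ s with f j ≠ 0, multinomial s (f - Pi.single j 1) := by
  refine Nat.eq_of_mul_eq_mul_left (prod_pos (s := s) fun i _ => factorial_pos (f i)) ?_
  have term : ∀ j ∈ s, f j ≠ 0 →
      (∏ i ∈ s, (f i)!) * multinomial s (f - Pi.single j 1) = f j * (∑ i ∈ s, f i - 1)! := by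
    intro j hjs hfj
    obtain ⟨g, rfl⟩ : ∃ g, f = g + Pi.single j 1 :=
      ⟨f - Pi.single j 1, (tsub_add_cancel_of_le (Pi.single_one_le hfj)).symm⟩
    rw [add_tsub_cancel_right]
    simp only [Pi.add_apply]
    rw [prod_factorial_add_single_one hjs, mul_assoc, multinomial_spec, sum_add_distrib,
      sum_pi_single', if_pos hjs, Pi.single_eq_same, Nat.add_sub_cancel]
  rw [multinomial_spec, mul_sum,
    sum_congr rfl fun j hj => term j (mem_filter.mp hj).1 (mem_filter.mp hj).2, ← sum_mul,
    sum_filter_ne_zero, mul_factorial_pred hf]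

end Nat

namespace GenFib

variable {k : ℕ}

def weight (α : Fin k → ℕ) : ℕ := ∑ j : Fin k, ((j : ℕ) + 1) * α j

lemma weight_add (α β : Fin k → ℕ) : weight (α + β) = weight α + weight β := by
  simp only [weight, Pi.add_apply, mul_add, sum_add_distrib]

lemma weight_single_one (j : Fin k) : weight (Pi.single j 1) = (j : ℕ) + 1 := by
  simp [weight, Pi.single_apply]

lemma weight_eq_zero_iff {α : Fin k → ℕ} : weight α = 0 ↔ α = 0 := by
  simp [weight, sum_eq_zero_iff, funext_iff]

lemma mul_apply_le_weight (α : Fin k → ℕ) (j : Fin k) : ((j : ℕ) + 1) * α j ≤ weight α :=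
  single_le_sum (f := fun i : Fin k => ((i : ℕ) + 1) * α i) (fun _ _ => Nat.zero_le _) (mem_univ j)

lemma succ_le_weight {α : Fin k → ℕ} {j : Fin k} (hj : α j ≠ 0) : (j : ℕ) + 1 ≤ weight α :=
  (Nat.le_mul_of_pos_right _ (Nat.pos_of_ne_zero hj)).trans (mul_apply_le_weight α j)

/-- `α j` is the multiplicity of the part `j + 1` in a partition of `n`. -/
def exponents (k n : ℕ) : Finset (Fin k → ℕ) :=
  (Fintype.piFinset fun _ : Fin k => range (n + 1)).filter (fun α => weight α = n)

lemma mem_exponents {n : ℕ} {α : Fin k → ℕ} : α ∈ exponents k n ↔ weight α = n := by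
  refine ⟨fun h => (mem_filter.mp h).2, fun h => mem_filter.mpr ⟨?_, h⟩⟩
  refine Fintype.mem_piFinset.mpr fun i => mem_range.mpr (Nat.lt_succ_of_le ?_)
  exact h ▸ (Nat.le_mul_of_pos_left _ i.val.succ_pos).trans (mul_apply_le_weight α i)

lemma exponents_zero : exponents k 0 = {0} := by
  ext α
  rw [mem_exponents, weight_eq_zero_iff, mem_singleton]

end GenFib

open GenFib

section

variable {R : Type*} [CommRing R] {k : ℕ}

lemma genFib_eq_sum_exponents (n : ℕ) (t : Fin k → R) :
    genFib k n t = ∑ α ∈ exponents k n, (Nat.multinomial univ α : R) * ∏ j, t j ^ α j := rfl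

lemma genFib_zero (t : Fin k → R) : genFib k 0 t = 1 := by
  simp [genFib_eq_sum_exponents, exponents_zero, Nat.multinomial]

lemma sum_exponents_succ_filter_ne_zero (n : ℕ) (t : Fin k → R) (j : Fin k) :
    ∑ α ∈ exponents k (n + 1) with α j ≠ 0,
        (Nat.multinomial univ (α - Pi.single j 1) : R) * ∏ i, t i ^ α i
      = if (j : ℕ) ≤ n then t j * genFib k (n - j) t else 0 := by
  split_ifs with hjn
  · rw [genFib_eq_sum_exponents, mul_sum]
    refine sum_nbij' (· - Pi.single j 1) (· + Pi.single j 1) ?_ ?_ ?_ ?_ ?_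
    · intro α hα
      obtain ⟨hα, hαj⟩ := mem_filter.mp hα
      rw [mem_exponents] at hα ⊢
      have := weight_add (α - Pi.single j 1) (Pi.single j 1)
      rw [tsub_add_cancel_of_le (Pi.single_one_le hαj), weight_single_one] at this
      omega
    · intro β hβ
      rw [mem_exponents] at hβ
      rw [mem_filter, mem_exponents, weight_add, weight_single_one]
      refine ⟨by omega, by simp⟩
    · intro α hα
      exact tsub_add_cancel_of_le (Pi.single_one_le (mem_filter.mp hα).2)
    · intro β _
      exact add_tsub_cancel_right β _
    · intro α hα
      conv_lhs => rw [← tsub_add_cancel_of_le (Pi.single_one_le (mem_filter.mp hα).2)]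
      rw [prod_pow_add_single_one, add_tsub_cancel_right]
      ring
  · refine sum_eq_zero fun α hα => absurd ?_ hjn
    obtain ⟨hα, hαj⟩ := mem_filter.mp hα
    have := succ_le_weight hαj
    rw [mem_exponents.mp hα] at this
    omega

lemma genFib_succ (n : ℕ) (t : Fin k → R) :
    genFib k (n + 1) t = ∑ j : Fin k, if (j : ℕ) ≤ n then t j * genFib k (n - j) t else 0 := by
  rw [genFib_eq_sum_exponents]
  calc _ = ∑ α ∈ exponents k (n + 1), ∑ j ∈ univ with α j ≠ 0,
        (Nat.multinomial univ (α - Pi.single j 1) : R) * ∏ i, t i ^ α i := by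
        refine sum_congr rfl fun α hα => ?_
        have hα : ∑ i, α i ≠ 0 := fun h => n.succ_ne_zero <| (mem_exponents.mp hα).symm.trans <|
          weight_eq_zero_iff.mpr <| funext fun i => sum_eq_zero_iff.mp h i (mem_univ i)
        rw [Nat.multinomial_eq_sum_sub_single hα, Nat.cast_sum, sum_mul]
    _ = ∑ j, ∑ α ∈ exponents k (n + 1) with α j ≠ 0,
        (Nat.multinomial univ (α - Pi.single j 1) : R) * ∏ i, t i ^ α i :=
        sum_comm' fun α j => by simp only [mem_filter, mem_univ, true_and, and_true]
    _ = _ := sum_congr rfl fun j _ => sum_exponents_succ_filter_ne_zero n t j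

/-- `shiftedGenFib k t m = F_{k, m - k}`, where `F_{k, n} = 0` for `-k < n < 0`. -/
def shiftedGenFib (k : ℕ) (t : Fin k → R) (m : ℕ) : R :=
  if k ≤ m then genFib k (m - k) t else 0

lemma shiftedGenFib_add_succ (t : Fin k → R) (n : ℕ) :
    shiftedGenFib k t (n + k + 1) = ∑ j : Fin k, t j * shiftedGenFib k t (n + k - j) := by
  rw [shiftedGenFib, if_pos (by omega), show n + k + 1 - k = n + 1 by omega, genFib_succ]
  refine sum_congr rfl fun j _ => ?_
  have hj := j.isLt
  by_cases hjn : (j : ℕ) ≤ n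
  · rw [if_pos hjn, shiftedGenFib, if_pos (by omega), show n + k - j - k = n - j by omega]
  · rw [if_neg hjn, shiftedGenFib, if_neg (by omega), mul_zero]

section Companion

variable {m : Type*} (t : Fin k → R) (M : Matrix (Fin k) m R)

lemma companion_mul_apply_of_succ_lt {i : Fin k} (hi : (i : ℕ) + 1 < k) (c : m) :
    (companion k t * M) i c = M ⟨i + 1, hi⟩ c := by
  rw [Matrix.mul_apply, sum_eq_single ⟨i + 1, hi⟩]
  · simp [companion, hi.ne]
  · intro j _ hj
    have : (j : ℕ) ≠ i + 1 := fun h => hj (Fin.ext h)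
    simp [companion, hi.ne, this]
  · simp

lemma companion_mul_apply_of_succ_eq {i : Fin k} (hi : (i : ℕ) + 1 = k) (c : m) :
    (companion k t * M) i c = ∑ j, t j * M j.rev c := by
  simp only [Matrix.mul_apply, companion, Matrix.of_apply, hi, if_true]
  exact Fintype.sum_equiv Fin.revPerm _ _ fun j => by simp

end Companion

lemma companion_pow_apply_of_succ_eq (t : Fin k → R) {l : Fin k} (hl : (l : ℕ) + 1 = k)
    (n : ℕ) (i : Fin k) : (companion k t ^ n) i l = shiftedGenFib k t (n + i + 1) := by
  induction n generalizing i with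
  | zero =>
    by_cases hil : i = l
    · subst hil
      simp [shiftedGenFib, hl, genFib_zero]
    · have : (i : ℕ) + 1 < k := by have := Fin.val_ne_of_ne hil; omega
      simp [Matrix.one_apply_ne hil, shiftedGenFib, this]
  | succ n ih =>
    rw [pow_succ']
    rcases Nat.lt_or_eq_of_le (Nat.succ_le_of_lt i.isLt) with hi | hi
    · rw [companion_mul_apply_of_succ_lt t _ hi, ih]
      congr 1
      simp only
      omega
    · rw [companion_mul_apply_of_succ_eq t _ hi, show n + 1 + i + 1 = n + k + 1 by omega,
        shiftedGenFib_add_succ]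
      refine sum_congr rfl fun j _ => ?_
      rw [ih, Fin.val_rev]
      congr 2
      omega

end

/-- the `(k,k)` entry of `A^n` is the generalized Fibonacci polynomial
`F_{k,n}(t_1,...,t_k)`. -/
theorem companion_pow_corner_eq_genFib {R : Type*} [CommRing R] (k : ℕ)
    (hk : 1 ≤ k) (t : Fin k → R) :
    ∀ n : ℕ,
      (companion k t ^ n) ⟨k - 1, by omega⟩ ⟨k - 1, by omega⟩ = genFib k n t := by
  intro n
  rw [companion_pow_apply_of_succ_eq t (by simp only; omega), shiftedGenFib,
    if_pos (by simp only; omega)]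
  congr 1
  simp only
  omega
end

section
/- Let Φ_n(X) be the n-th cyclotomic polynomial, of degree φ(n), written as X^{φ(n)} - t_1 X^{φ(n)-1} - ... - t_{φ(n)}. Then the associated generalized Fibonacci recursion f_m = Σ t_j f_{m-j} with f_0 = 1, f_{-j} = 0 for 0 < j < φ(n), is periodic with period dividing n, and n is its exact period. -/
/-!
A sequence `g : ℕ → R` is acted on by `R[X]` through the shift `g ↦ g (· + 1)`. The recursion
says that `Φ_n` annihilates `f`, and `f` has period `c` iff `X ^ c - 1` annihilates it. Since `f`
is the impulse response of the recursion (its first `φ(n) - 1` terms vanish and the next is `1`),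
no nonzero polynomial of degree `< φ(n)` annihilates it, so its annihilator is exactly the ideal
generated by the monic `Φ_n`. Hence `c` is a period iff `Φ_n ∣ X ^ c - 1`, i.e. iff `n ∣ c`,
because a primitive `n`-th root of unity is a root of `Φ_n`.
-/

open Polynomial

section SeqShift

variable {R : Type*} [CommRing R]

variable (R) in
abbrev seqShift : Module.End R (ℕ → R) := LinearMap.funLeft R R (· + 1)

theorem seqShift_pow_apply (k : ℕ) (g : ℕ → R) (m : ℕ) : (seqShift R ^ k) g m = g (m + k) := by
  induction k generalizing g with
  | zero => rfl
  | succ k ih => rw [pow_succ, Module.End.mul_apply, ih]; rfl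

theorem aeval_seqShift_apply (p : R[X]) (g : ℕ → R) (m : ℕ) :
    aeval (seqShift R) p g m = ∑ i ∈ Finset.range (p.natDegree + 1), p.coeff i * g (m + i) := by
  simp only [aeval_eq_sum_range, LinearMap.coe_sum, Finset.sum_apply, LinearMap.smul_apply,
    Pi.smul_apply, seqShift_pow_apply, smul_eq_mul]

theorem aeval_X_pow_sub_one_seqShift_eq_zero_iff (c : ℕ) (g : ℕ → R) :
    aeval (seqShift R) (X ^ c - 1 : R[X]) g = 0 ↔ ∀ m, g (m + c) = g m := by
  simp only [funext_iff, map_sub, map_pow, aeval_X, map_one, LinearMap.sub_apply,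
    seqShift_pow_apply, Module.End.one_apply, sub_eq_zero]

theorem aeval_seqShift_eq_zero_of_recurrence {d : ℕ} (t : Fin d → R) (g : ℕ → R)
    (hrec : ∀ m, d ≤ m → g m = ∑ j : Fin d, t j * g (m - 1 - j)) :
    aeval (seqShift R) (X ^ d - ∑ j : Fin d, C (t j) * X ^ (d - 1 - j)) g = 0 := by
  funext m
  simp only [map_sub, map_pow, map_sum, map_mul, aeval_C, aeval_X, LinearMap.sub_apply,
    LinearMap.coe_sum, Finset.sum_apply, Pi.sub_apply, Module.End.mul_apply,
    Module.algebraMap_end_apply, Pi.smul_apply, seqShift_pow_apply, smul_eq_mul, Pi.zero_apply]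
  rw [hrec (m + d) le_add_self, sub_eq_zero]
  refine Finset.sum_congr rfl fun j _ => ?_
  rw [show m + d - 1 - j = m + (d - 1 - j) by omega]

/-- Evaluating at `k - deg q` isolates the leading coefficient of `q`. -/
theorem eq_zero_of_aeval_seqShift_eq_zero {k : ℕ} {g : ℕ → R} (h0 : ∀ j < k, g j = 0)
    (h1 : g k = 1) {q : R[X]} (hq : q.natDegree ≤ k) (hqg : aeval (seqShift R) q g = 0) :
    q = 0 := by
  have hm := congrFun hqg (k - q.natDegree)
  rw [aeval_seqShift_apply, Finset.sum_range_succ,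
    Finset.sum_eq_zero fun i hi => by rw [h0 _ (by simp at hi; omega), mul_zero],
    zero_add, Nat.sub_add_cancel hq, h1, mul_one] at hm
  exact leadingCoeff_eq_zero.mp hm

theorem aeval_seqShift_eq_zero_iff_dvd {p : R[X]} (hp : p.Monic) {k : ℕ}
    (hdeg : p.natDegree = k + 1) {g : ℕ → R} (h0 : ∀ j < k, g j = 0) (h1 : g k = 1)
    (hpg : aeval (seqShift R) p g = 0) (q : R[X]) :
    aeval (seqShift R) q g = 0 ↔ p ∣ q := by
  constructor
  · intro hqg
    have hp1 : p ≠ 1 := fun h => by simp [h] at hdeg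
    have hrem : aeval (seqShift R) (q %ₘ p) g = 0 := by
      rw [modByMonic_eq_sub_mul_div q p, mul_comm p, map_sub, map_mul, LinearMap.sub_apply,
        Module.End.mul_apply, hpg, map_zero, hqg, sub_zero]
    have hlt := natDegree_modByMonic_lt q hp hp1
    exact (modByMonic_eq_zero_iff_dvd hp).1
      (eq_zero_of_aeval_seqShift_eq_zero h0 h1 (by omega) hrem)
  · rintro ⟨r, rfl⟩
    rw [mul_comm, map_mul, Module.End.mul_apply, hpg, map_zero]

end SeqShift

theorem cyclotomic_dvd_X_pow_sub_one_iff {n : ℕ} (hn : 0 < n) (c : ℕ) :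
    cyclotomic n ℤ ∣ X ^ c - 1 ↔ n ∣ c := by
  constructor
  · intro hdvd
    have hdvdC : cyclotomic n ℂ ∣ X ^ c - 1 := by
      simpa using Polynomial.map_dvd (Int.castRingHom ℂ) hdvd
    have hζ := Complex.isPrimitiveRoot_exp n hn.ne'
    have hroot := (hζ.isRoot_cyclotomic hn).dvd hdvdC
    simp only [IsRoot, eval_sub, eval_pow, eval_X, eval_one, sub_eq_zero] at hroot
    exact hζ.dvd_of_pow_eq_one c hroot
  · rintro ⟨e, rfl⟩
    exact (cyclotomic.dvd_X_pow_sub_one n ℤ).trans <| by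
      simpa [one_pow, pow_mul] using sub_dvd_pow_sub_pow ((X : ℤ[X]) ^ n) 1 e

/-- writing the `n`-th cyclotomic polynomial as
`X^{φ(n)} - t_1 X^{φ(n)-1} - ... - t_{φ(n)}`, the associated generalized Fibonacci
recursion is periodic with exact (least) period `n`. -/
theorem gfp_cyclotomic_period
    (n : ℕ) (hn : 0 < n) (t : Fin (Nat.totient n) → ℤ)
    (hcyc : Polynomial.cyclotomic n ℤ =
      Polynomial.X ^ (Nat.totient n) -
        ∑ j : Fin (Nat.totient n),
          Polynomial.C (t j) * Polynomial.X ^ (Nat.totient n - 1 - (j : ℕ)))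
    (f : ℕ → ℤ)
    (h0 : ∀ j, j < Nat.totient n - 1 → f j = 0) (h1 : f (Nat.totient n - 1) = 1)
    (hrec : ∀ m, Nat.totient n ≤ m →
      f m = ∑ j : Fin (Nat.totient n), t j * f (m - 1 - (j : ℕ))) :
    IsLeast {c : ℕ | 0 < c ∧ ∀ m, f (m + c) = f m} n := by
  have hdeg : (cyclotomic n ℤ).natDegree = Nat.totient n - 1 + 1 := by
    rw [natDegree_cyclotomic, Nat.sub_add_cancel (Nat.totient_pos.2 hn)]
  have hann : aeval (seqShift ℤ) (cyclotomic n ℤ) f = 0 :=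
    hcyc ▸ aeval_seqShift_eq_zero_of_recurrence t f hrec
  have hperiod (c : ℕ) : (∀ m, f (m + c) = f m) ↔ n ∣ c := by
    rw [← aeval_X_pow_sub_one_seqShift_eq_zero_iff,
      aeval_seqShift_eq_zero_iff_dvd (cyclotomic.monic n ℤ) hdeg h0 h1 hann,
      cyclotomic_dvd_X_pow_sub_one_iff hn]
  exact ⟨⟨hn, (hperiod n).2 dvd_rfl⟩, fun c ⟨hc, hper⟩ => Nat.le_of_dvd hc ((hperiod c).1 hper)⟩
end

section
/- Let p be a prime, t_1,...,t_k integers with p ∤ t_k, and C(X) = X^k - t_1 X^{k-1} - ... - t_k. If C(X) has a repeated irreducible factor mod p, then p divides the period c_p of the generalized Fibonacci sequence mod p. -/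
/-!
Reduced mod `p`, the sequence is `n ↦ coeff_{k-1} (X ^ n mod C̄)`. This functional is nondegenerate:
if it vanishes on all shifts `X ^ n * a`, then `C̄ ∣ a` (test the shift that moves the leading
coefficient of `a mod C̄` to degree `k - 1`). Hence a period `c` gives `C̄ ∣ X ^ c - 1`. If `p ∤ c`,
then `X ^ c - 1` is separable over `𝔽_p`, so squarefree, and so is its divisor `C̄`, contradicting
the repeated factor.
-/

open Polynomial

namespace Polynomial

variable {R : Type*} [CommRing R]

theorem dvd_of_forall_coeff_X_pow_mul_modByMonic_eq_zero {P a : R[X]} (hP : P.Monic)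
    (h : ∀ n, ((X ^ n * a) %ₘ P).coeff (P.natDegree - 1) = 0) : P ∣ a := by
  nontriviality R
  rw [← modByMonic_eq_zero_iff_dvd hP]
  by_contra hr
  set r := a %ₘ P
  set m := P.natDegree - 1 - r.natDegree
  have hd : r.natDegree < P.natDegree := natDegree_lt_natDegree hr (degree_modByMonic_lt a hP)
  have hshift : (X ^ m * a) %ₘ P = X ^ m * r := by
    have hdvd : P ∣ X ^ m * a - X ^ m * r := by
      rw [← mul_sub]; exact (dvd_sub_comm.1 (dvd_modByMonic_sub a P)).mul_left _
    have hdeg : (X ^ m * r).natDegree < P.natDegree :=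
      (natDegree_mul_le.trans (Nat.add_le_add_right (natDegree_X_pow_le m) _)).trans_lt (by omega)
    rw [modByMonic_eq_of_dvd_sub hP hdvd, (modByMonic_eq_self_iff hP).2 (degree_lt_degree hdeg)]
  have := h m
  rw [hshift, coeff_X_pow_mul', if_pos (by omega), show P.natDegree - 1 - m = r.natDegree by omega]
    at this
  exact leadingCoeff_ne_zero.2 hr this

theorem dvd_X_pow_sub_one_of_periodic {P : R[X]} (hP : P.Monic) {c : ℕ}
    (h : ∀ n, (X ^ (n + c) %ₘ P).coeff (P.natDegree - 1) = (X ^ n %ₘ P).coeff (P.natDegree - 1)) :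
    P ∣ X ^ c - 1 :=
  dvd_of_forall_coeff_X_pow_mul_modByMonic_eq_zero hP fun n => by
    rw [mul_sub, mul_one, ← pow_add, sub_modByMonic, coeff_sub, h, sub_self]

theorem squarefree_X_pow_sub_one {F : Type*} [Field F] {c : ℕ} (hc : (c : F) ≠ 0) :
    Squarefree (X ^ c - 1 : F[X]) := by
  simpa using (separable_X_pow_sub_C 1 hc one_ne_zero).squarefree

end Polynomial

section Recurrence

variable {R : Type*} [CommRing R] {k : ℕ}

noncomputable def recurrencePoly (t : Fin k → R) : R[X] :=
  X ^ k - ∑ j : Fin k, C (t j) * X ^ (k - 1 - (j : ℕ))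

theorem degree_sum_C_mul_X_pow_rev_lt (t : Fin k → R) :
    (∑ j : Fin k, C (t j) * X ^ (k - 1 - (j : ℕ))).degree < (k : WithBot ℕ) := by
  refine (degree_sum_le _ _).trans_lt ((Finset.sup_lt_iff (WithBot.bot_lt_coe k)).2 fun j _ => ?_)
  exact (degree_C_mul_X_pow_le _ _).trans_lt (Nat.cast_lt.2 (by omega))

theorem recurrencePoly_monic (t : Fin k → R) : (recurrencePoly t).Monic :=
  monic_X_pow_sub (degree_sum_C_mul_X_pow_rev_lt t)

theorem natDegree_recurrencePoly [Nontrivial R] (t : Fin k → R) :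
    (recurrencePoly t).natDegree = k := by
  refine natDegree_eq_of_degree_eq_some ?_
  rw [recurrencePoly, degree_sub_eq_left_of_degree_lt, degree_X_pow]
  simpa only [degree_X_pow] using degree_sum_C_mul_X_pow_rev_lt t

theorem map_recurrencePoly {S : Type*} [CommRing S] (φ : R →+* S) (t : Fin k → R) :
    (recurrencePoly t).map φ = recurrencePoly (φ ∘ t) := by
  simp [recurrencePoly, Polynomial.map_sum]

theorem X_pow_eq_mul_recurrencePoly_add (t : Fin k → R) {n : ℕ} (hn : k ≤ n) :
    (X ^ n : R[X]) = X ^ (n - k) * recurrencePoly t + ∑ j : Fin k, t j • X ^ (n - 1 - (j : ℕ)) := by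
  have hsplit : (X ^ n : R[X]) = X ^ (n - k) * X ^ k := by rw [← pow_add, Nat.sub_add_cancel hn]
  rw [hsplit, recurrencePoly, mul_sub, sub_add_eq_add_sub, eq_sub_iff_add_eq, add_left_cancel_iff,
    Finset.mul_sum]
  refine Finset.sum_congr rfl fun j _ => ?_
  rw [smul_eq_C_mul, mul_left_comm, ← pow_add]
  congr 2
  omega

theorem coeff_X_pow_modByMonic_recurrencePoly (t : Fin k → R) (u : ℕ → R)
    (h0 : ∀ j, j < k - 1 → u j = 0) (h1 : u (k - 1) = 1)
    (hrec : ∀ n, k ≤ n → u n = ∑ j : Fin k, t j * u (n - 1 - (j : ℕ))) (n : ℕ) :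
    (X ^ n %ₘ recurrencePoly t).coeff (k - 1) = u n := by
  nontriviality R
  have hP := recurrencePoly_monic t
  induction n using Nat.strong_induction_on with
  | _ n ih =>
  rcases lt_or_ge n k with hn | hn
  · have hdeg : (X ^ n : R[X]).natDegree < (recurrencePoly t).natDegree := by
      rwa [natDegree_X_pow, natDegree_recurrencePoly]
    rw [(modByMonic_eq_self_iff hP).2 (degree_lt_degree hdeg), coeff_X_pow]
    rcases (Nat.le_sub_one_of_lt hn).lt_or_eq with h | rfl
    · rw [if_neg (by omega), h0 n h]
    · rw [if_pos rfl, h1]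
  · rw [X_pow_eq_mul_recurrencePoly_add t hn, ← modByMonicHom_apply, map_add, map_sum,
      modByMonicHom_apply, mul_self_modByMonic hP, zero_add, finsetSum_coeff, hrec n hn]
    refine Finset.sum_congr rfl fun j _ => ?_
    rw [map_smul, coeff_smul, modByMonicHom_apply, ih _ (by omega), smul_eq_mul]

end Recurrence

/-- if `p ∤ t_k` and the core polynomial has a repeated irreducible
factor mod `p`, then `p` divides the period `c_p` of the generalized Fibonacci
sequence mod `p`. -/
theorem p_dvd_period_of_repeated_factor
    (k : ℕ) (t : Fin k → ℤ) (f : ℕ → ℤ)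
    (h0 : ∀ j, j < k - 1 → f j = 0) (h1 : f (k - 1) = 1)
    (hrec : ∀ n, k ≤ n → f n = ∑ j : Fin k, t j * f (n - 1 - (j : ℕ)))
    (p : ℕ) (hp : p.Prime)
    (hrep : ∃ q : Polynomial (ZMod p), Irreducible q ∧
      q ^ 2 ∣ Polynomial.map (Int.castRingHom (ZMod p))
        (Polynomial.X ^ k -
          ∑ j : Fin k, Polynomial.C (t j) * Polynomial.X ^ (k - 1 - (j : ℕ)))) :
    p ∣ sInf {c : ℕ | 0 < c ∧ ∀ n, ((f (n + c) : ZMod p) = (f n : ZMod p))} := by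
  have := Fact.mk hp
  set S := {c : ℕ | 0 < c ∧ ∀ n, ((f (n + c) : ZMod p) = (f n : ZMod p))}
  -- no period at all: `sInf ∅ = 0`
  rcases S.eq_empty_or_nonempty with hS | hS
  · rw [hS, Nat.sInf_empty]
    exact dvd_zero p
  obtain ⟨-, hper⟩ := Nat.sInf_mem hS
  by_contra hpc
  set P := recurrencePoly fun j => (t j : ZMod p)
  have hcoeff := coeff_X_pow_modByMonic_recurrencePoly (fun j => (t j : ZMod p))
    (fun n => (f n : ZMod p)) (fun j hj => by simp [h0 j hj]) (by simp [h1])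
    (fun n hn => by simp [hrec n hn])
  have hPc : P ∣ X ^ sInf S - 1 :=
    dvd_X_pow_sub_one_of_periodic (recurrencePoly_monic _) fun n => by
      rw [natDegree_recurrencePoly, hcoeff, hcoeff]
      exact hper n
  obtain ⟨q, hq, hq2⟩ := hrep
  rw [← recurrencePoly, map_recurrencePoly] at hq2
  have hsq : Squarefree P := (squarefree_X_pow_sub_one
    (by rwa [Ne, ZMod.natCast_eq_zero_iff])).squarefree_of_dvd hPc
  exact hq.not_isUnit (hsq q (sq q ▸ hq2))
end

section
/- For the generalized Fibonacci polynomials F_{k,n}(t_1,...,t_k) and generalized Lucas polynomials G_{k,n}(t_1,...,t_k), the partial derivative identity ∂G_{k,n}/∂t_j = n · F_{k,n-j} holds for all n ≥ 1 and 1 ≤ j ≤ k. -/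
/-!
Differentiating `t^α` in `t_j` gives `α_j t^(α - e_j)`, and `α ↦ α - e_j` is a bijection from the
`α ⊢ n` with `α_j ≥ 1` onto the `β ⊢ n - j`. Since `|α| = |β| + 1`, the identity
`multinomial(|β| + 1; β + e_j) (β_j + 1) = (|β| + 1) multinomial(|β|; β)` cancels the denominator
`|α|` of the Lucas coefficient and leaves `n multinomial(|β|; β)`.
-/

open MvPolynomial

/-- The generalized Fibonacci polynomial `F_{k,n}` as a polynomial in the
variables `t_1, ..., t_k` (here `X j` denotes `t_{j+1}`). -/
noncomputable def genFibPoly (k n : ℕ) : MvPolynomial (Fin k) ℚ :=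
  ∑ α ∈ (Fintype.piFinset fun _ : Fin k => Finset.range (n + 1)).filter
      (fun α => ∑ j : Fin k, ((j : ℕ) + 1) * α j = n),
    (Nat.multinomial Finset.univ α : ℚ) • ∏ j : Fin k, (X j : MvPolynomial (Fin k) ℚ) ^ α j

/-- The generalized Lucas polynomial `G_{k,n}`, with coefficients
`(n/|α|)·multinomial(|α|; α)`. -/
noncomputable def genLucasPoly (k n : ℕ) : MvPolynomial (Fin k) ℚ :=
  ∑ α ∈ (Fintype.piFinset fun _ : Fin k => Finset.range (n + 1)).filter
      (fun α => ∑ j : Fin k, ((j : ℕ) + 1) * α j = n),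
    (((n : ℚ) / (∑ j : Fin k, (α j : ℚ))) * (Nat.multinomial Finset.univ α : ℚ)) •
      ∏ j : Fin k, (X j : MvPolynomial (Fin k) ℚ) ^ α j

open Finset

theorem Nat.multinomial_add_single_mul {α : Type*} [DecidableEq α] {s : Finset α} {a : α}
    (ha : a ∈ s) (f : α → ℕ) :
    multinomial s (f + Pi.single a 1) * (f a + 1) = (∑ i ∈ s, f i + 1) * multinomial s f := by
  have hs : a ∉ s.erase a := notMem_erase a s
  have hoff : ∀ i ∈ s.erase a, (f + Pi.single a 1 : α → ℕ) i = f i := fun i hi => by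
    simp [ne_of_mem_erase hi]
  rw [← insert_erase ha, multinomial_insert hs, multinomial_insert hs, multinomial_congr hoff,
    sum_insert hs, sum_congr rfl hoff]
  simp only [Pi.add_apply, Pi.single_eq_same]
  rw [add_right_comm, mul_right_comm, ← add_one_mul_choose_eq]
  ring

theorem MvPolynomial.prod_univ_X_pow_eq_monomial {R σ : Type*} [CommSemiring R] [Fintype σ]
    (β : σ → ℕ) :
    (∏ s, X s ^ β s : MvPolynomial σ R) = monomial (Finsupp.equivFunOnFinite.symm β) 1 := by
  rw [monomial_eq, C_1, one_mul, Finsupp.prod_fintype]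
  · rfl
  · simp

theorem MvPolynomial.pderiv_prod_X_pow {R σ : Type*} [CommSemiring R] [Fintype σ] [DecidableEq σ]
    (α : σ → ℕ) (i : σ) :
    pderiv i (∏ s, X s ^ α s : MvPolynomial σ R) =
      (α i : R) • ∏ s, X s ^ (α - Pi.single i 1 : σ → ℕ) s := by
  have hexp : Finsupp.equivFunOnFinite.symm α - Finsupp.single i 1 =
      Finsupp.equivFunOnFinite.symm (α - Pi.single i 1) := by
    ext s
    simp [Pi.single_apply, Finsupp.single_apply, eq_comm]
  rw [prod_univ_X_pow_eq_monomial, prod_univ_X_pow_eq_monomial, pderiv_monomial, smul_monomial,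
    hexp]
  simp

-- The index set `α ⊢ n` of `genFibPoly` and `genLucasPoly`: `X j = t_{j+1}` has weight `j + 1`.
def isobaricExponents (k n : ℕ) : Finset (Fin k → ℕ) :=
  (Fintype.piFinset fun _ : Fin k => range (n + 1)).filter
    (fun α => ∑ j : Fin k, ((j : ℕ) + 1) * α j = n)

section IsobaricExponents

variable {k n : ℕ}

theorem mem_isobaricExponents {α : Fin k → ℕ} :
    α ∈ isobaricExponents k n ↔ ∑ i : Fin k, ((i : ℕ) + 1) * α i = n := by
  refine mem_filter.trans (and_iff_right_of_imp fun hα => Fintype.mem_piFinset.2 fun i => ?_)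
  rw [mem_range, Nat.lt_succ_iff, ← hα]
  exact (Nat.le_mul_of_pos_left _ i.succ_pos).trans
    (single_le_sum (f := fun i : Fin k => ((i : ℕ) + 1) * α i) (fun _ _ => Nat.zero_le _)
      (mem_univ i))

theorem add_one_le_of_mem_isobaricExponents {α : Fin k → ℕ} (hα : α ∈ isobaricExponents k n)
    {j : Fin k} (hj : α j ≠ 0) : (j : ℕ) + 1 ≤ n := by
  rw [← mem_isobaricExponents.1 hα]
  exact (Nat.le_mul_of_pos_right _ (Nat.pos_of_ne_zero hj)).trans
    (single_le_sum (f := fun i : Fin k => ((i : ℕ) + 1) * α i) (fun _ _ => Nat.zero_le _)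
      (mem_univ j))

theorem weight_add_single (β : Fin k → ℕ) (j : Fin k) :
    ∑ i : Fin k, ((i : ℕ) + 1) * (β + Pi.single j 1 : Fin k → ℕ) i =
      ∑ i : Fin k, ((i : ℕ) + 1) * β i + (j + 1) := by
  simp [mul_add, sum_add_distrib, Pi.single_apply]

theorem filter_isobaricExponents_eq_map (m : ℕ) (j : Fin k) :
    {α ∈ isobaricExponents k (m + (j + 1)) | α j ≠ 0} =
      (isobaricExponents k m).map (addRightEmbedding (Pi.single j 1)) := by
  ext α
  simp only [mem_filter, mem_map, addRightEmbedding_apply, mem_isobaricExponents]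
  constructor
  · rintro ⟨hα, hj⟩
    have hcancel : α - Pi.single j 1 + Pi.single j 1 = α := by
      ext i
      rcases eq_or_ne i j with rfl | hij
      · simp only [Pi.add_apply, Pi.sub_apply, Pi.single_eq_same]
        omega
      · simp [hij]
    refine ⟨α - Pi.single j 1, ?_, hcancel⟩
    have := weight_add_single (α - Pi.single j 1) j
    rw [hcancel, hα] at this
    omega
  · rintro ⟨β, hβ, rfl⟩
    rw [weight_add_single, hβ]
    simp

end IsobaricExponents

theorem div_sum_mul_multinomial_add_single {K ι : Type*} [Field K] [CharZero K] [DecidableEq ι]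
    {s : Finset ι} {a : ι} (ha : a ∈ s) (x : K) (f : ι → ℕ) :
    x / (∑ i ∈ s, ((f + Pi.single a 1 : ι → ℕ) i : K)) * Nat.multinomial s (f + Pi.single a 1) *
      ((f a : K) + 1) = x * Nat.multinomial s f := by
  have hsum : ∑ i ∈ s, ((f + Pi.single a 1 : ι → ℕ) i : K) = ∑ i ∈ s, (f i : K) + 1 := by
    simp [sum_add_distrib, Pi.single_apply, ha]
  have hmul : (Nat.multinomial s (f + Pi.single a 1) : K) * ((f a : K) + 1) =
      (∑ i ∈ s, (f i : K) + 1) * Nat.multinomial s f := by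
    exact_mod_cast Nat.multinomial_add_single_mul ha f
  have hne : ∑ i ∈ s, (f i : K) + 1 ≠ 0 := by exact_mod_cast (∑ i ∈ s, f i).succ_ne_zero
  rw [hsum, mul_assoc, hmul, ← mul_assoc, div_mul_cancel₀ x hne]

section Derivative

variable {R : Type*} [CommSemiring R] {k : ℕ}

theorem pderiv_sum_isobaricExponents (c : (Fin k → ℕ) → R) (n : ℕ) (j : Fin k) :
    pderiv j (∑ α ∈ isobaricExponents k n, c α • ∏ i, (X i : MvPolynomial (Fin k) R) ^ α i) =
      ∑ α ∈ isobaricExponents k n with α j ≠ 0,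
        (c α * α j) • ∏ i, (X i : MvPolynomial (Fin k) R) ^ (α - Pi.single j 1 : Fin k → ℕ) i := by
  simp_rw [map_sum, Derivation.map_smul, pderiv_prod_X_pow, smul_smul]
  refine (sum_filter_of_ne (p := fun α : Fin k → ℕ => α j ≠ 0) fun α _ h hj => h ?_).symm
  simp [hj]

theorem pderiv_sum_isobaricExponents_add (c : (Fin k → ℕ) → R) (m : ℕ) (j : Fin k) :
    pderiv j (∑ α ∈ isobaricExponents k (m + (j + 1)),
        c α • ∏ i, (X i : MvPolynomial (Fin k) R) ^ α i) =
      ∑ β ∈ isobaricExponents k m,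
        (c (β + Pi.single j 1) * ((β j : R) + 1)) • ∏ i, (X i : MvPolynomial (Fin k) R) ^ β i := by
  rw [pderiv_sum_isobaricExponents, filter_isobaricExponents_eq_map, sum_map]
  simp

theorem pderiv_sum_isobaricExponents_of_lt (c : (Fin k → ℕ) → R) {n : ℕ} {j : Fin k}
    (hn : n < j + 1) :
    pderiv j (∑ α ∈ isobaricExponents k n, c α • ∏ i, (X i : MvPolynomial (Fin k) R) ^ α i) =
      0 := by
  rw [pderiv_sum_isobaricExponents, filter_false_of_mem fun α hα hj =>
    hn.not_ge (add_one_le_of_mem_isobaricExponents hα hj), sum_empty]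

end Derivative

theorem pderiv_genLucasPoly_general (k n : ℕ) (j : Fin k) :
    pderiv j (genLucasPoly k n) =
      if (j : ℕ) + 1 ≤ n then (n : ℚ) • genFibPoly k (n - ((j : ℕ) + 1)) else 0 := by
  split_ifs with hjn
  · obtain ⟨m, rfl⟩ := Nat.exists_eq_add_of_le' hjn
    refine (pderiv_sum_isobaricExponents_add _ m j).trans ?_
    rw [Nat.add_sub_cancel, genFibPoly, smul_sum]
    refine sum_congr rfl fun β _ => ?_
    rw [smul_smul, div_sum_mul_multinomial_add_single (mem_univ j)]
  · exact pderiv_sum_isobaricExponents_of_lt _ (not_le.1 hjn)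

/-- `∂G_{k,n}/∂t_j = n · F_{k,n-j}` for `n ≥ 1` and `1 ≤ j ≤ k`
(with the convention `F_{k,m} = 0` for `m < 0`; here `j : Fin k` denotes `t_{j+1}`). -/
theorem pderiv_genLucasPoly (k n : ℕ) (hn : 1 ≤ n) (j : Fin k) :
    pderiv j (genLucasPoly k n) =
      if (j : ℕ) + 1 ≤ n then (n : ℚ) • genFibPoly k (n - ((j : ℕ) + 1)) else 0 :=
  pderiv_genLucasPoly_general k n j
end
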